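/- In any graceful coloring of a graph G using the color set {1, 2, ..., Δ + i} where Δ is the maximum degree and i ≥ 1, every vertex of maximum degree receives a color from {1,...,i} ∪ {Δ + 1, ..., Δ + i}. -/
import Mathlib


/-- A graceful `k`-coloring of `G`: a proper vertex coloring with colors in
`{1, ..., k}` whose induced edge coloring `f*(uv) = |f u - f v|` is a proper
edge coloring. -/
def IsGracefulColoring {V : Type*} (G : SimpleGraph V) (k : ℕ) (f : V → ℕ) : Prop :=
  (∀ v, 1 ≤ f v ∧ f v ≤ k) ∧
  (∀ ⦃u v⦄, G.Adj u v → f u ≠ f v) ∧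
  (∀ ⦃u v w⦄, G.Adj u v → G.Adj u w → v ≠ w →
    ((f u : ℤ) - f v).natAbs ≠ ((f u : ℤ) - f w).natAbs)

/-- The graceful chromatic number: the least `k` admitting a graceful `k`-coloring. -/
noncomputable def gracefulChromaticNumber {V : Type*} (G : SimpleGraph V) : ℕ :=
  sInf {k | ∃ f : V → ℕ, IsGracefulColoring G k f}

theorem gracefulColoring_maxDegree_vertex_color {V : Type*} [Fintype V]
    (G : SimpleGraph V) [DecidableRel G.Adj] (i : ℕ) (hi : 1 ≤ i) (f : V → ℕ)
    (hf : IsGracefulColoring G (G.maxDegree + i) f)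
    (w : V) (hw : G.degree w = G.maxDegree) :
    f w ≤ i ∨ G.maxDegree + 1 ≤ f w := by
  by_contra h
  push_neg at h
  obtain ⟨h1, h2⟩ := h
  set Δ := G.maxDegree with hΔ
  have hc1 : i + 1 ≤ f w := h1
  have hc2 : f w ≤ Δ := by omega
  have hinj : Set.InjOn (fun v => ((f w : ℤ) - f v).natAbs)
      (G.neighborFinset w : Set V) := by
    intro a ha b hb hab
    by_contra hne
    exact hf.2.2 ((G.mem_neighborFinset w a).mp ha)
      ((G.mem_neighborFinset w b).mp hb) hne hab
  have hmaps : ∀ v ∈ G.neighborFinset w,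
      ((f w : ℤ) - f v).natAbs ∈ Finset.Icc 1 (Δ - 1) := by
    intro v hv
    have hadj := (G.mem_neighborFinset w v).mp hv
    have hne := hf.2.1 hadj
    have hv1 := (hf.1 v).1
    have hv2 := (hf.1 v).2
    rw [Finset.mem_Icc]
    omega
  have hcard := Finset.card_le_card_of_injOn _ hmaps hinj
  rw [G.card_neighborFinset_eq_degree, hw, Nat.card_Icc] at hcard
  omega
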